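/- arXiv:2211.06933 — 3 statements merged into one kernel-verified Lean document; each statement's English description precedes it below -/
import Mathlib

section
/- Let T ∈ (0, ∞) and let u be an admissible solution of the 1D diffusionless equation on [0,T). Then u is uniformly bounded on [0,T): sup over (t,x) ∈ [0,T) × ℝ of u(t,x) is finite (i.e., the L^∞ norm of u(t,·) does not blow up in finite time). -/
open MeasureTheory Set Real NNReal Filter Topology

/-!
Put `w = (u + 1)⁻¹ ∈ (0, 1]`. For fixed `x`, `w` solves
`∂ₜw = w (1 - w) - g(t) (a (1 - w)² + α f(x) w²)` with `g = M - ∫₀¹ u ∈ [0, M]`, and this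
right-hand side is Lipschitz in `w` and in `x`, uniformly in `t`. Grönwall's inequality applied
to `w(t, x) - w(t, y)` shows that `w(t, ·)` is `B`-Lipschitz for all `t < T`, with `B` depending
only on the data and on `T`. So where `u(t, x)` is large, i.e. `c = w(t, x)` is small,
`u(t, y) ≥ (c + B (y - x))⁻¹ - 1` on `[x, x + 1]`; integrating over this period gives
`log (1 + B / c) / B - 1 ≤ M`, that is `u(t, x) + 1 = c⁻¹ ≤ (exp (B (M + 1)) - 1) / B`.
-/

theorem Function.Periodic.exists_abs_le {h : ℝ → ℝ} {c : ℝ} (hp : Function.Periodic h c)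
    (hc : c ≠ 0) (hh : Continuous h) : ∃ C, ∀ x, |h x| ≤ C := by
  obtain ⟨C, hC⟩ := isBounded_iff_forall_norm_le.mp (hp.isBounded_of_continuous hc hh)
  exact ⟨C, fun x => hC _ (mem_range_self x)⟩

theorem Function.Periodic.exists_lipschitzWith {h : ℝ → ℝ} {c : ℝ} (hp : Function.Periodic h c)
    (hc : c ≠ 0) (hh : ContDiff ℝ 1 h) : ∃ L, LipschitzWith L h := by
  have hp' : Function.Periodic (deriv h) c := fun x => by
    rw [← deriv_comp_add_const, show (fun y => h (y + c)) = h from funext hp]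
  obtain ⟨C, hC⟩ := hp'.exists_abs_le hc (hh.continuous_deriv le_rfl)
  refine ⟨C.toNNReal, lipschitzWith_of_nnnorm_deriv_le (hh.differentiable one_ne_zero) fun x => ?_⟩
  rw [← NNReal.coe_le_coe, coe_nnnorm, Real.coe_toNNReal']
  exact (hC x).trans (le_max_left _ _)

theorem DifferentiableOn.hasDerivWithinAt_Ici_of_Ico {h : ℝ → ℝ} {T t : ℝ}
    (hh : DifferentiableOn ℝ h (Ico 0 T)) (ht : t ∈ Ico 0 T) :
    HasDerivWithinAt h (derivWithin h (Ici 0) t) (Ici t) t := by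
  have hEq : Ico (0 : ℝ) T =ᶠ[𝓝 t] Ici 0 := by
    rw [eventuallyEq_set]
    filter_upwards [Iio_mem_nhds ht.2] with s hs
    exact ⟨fun h => h.1, fun h => ⟨h, hs⟩⟩
  have hderiv := (hh t ht).hasDerivWithinAt.congr_set hEq
  rw [derivWithin_congr_set hEq] at hderiv
  exact hderiv.mono (Ici_subset_Ici.mpr ht.1)

theorem abs_sub_le_mul_exp_of_hasDerivWithinAt {w w' : ℝ → ℝ → ℝ} {K ε L τ : ℝ}
    (hK : 0 < K) (hε : 0 ≤ ε) (hτ : 0 ≤ τ)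
    (hcont : ∀ x, ContinuousOn (fun t => w t x) (Icc 0 τ))
    (hderiv : ∀ x, ∀ t ∈ Ico 0 τ, HasDerivWithinAt (fun s => w s x) (w' t x) (Ici t) t)
    (hw' : ∀ t ∈ Ico 0 τ, ∀ x y, |w' t x - w' t y| ≤ K * |w t x - w t y| + ε * |x - y|)
    (h0 : ∀ x y, |w 0 x - w 0 y| ≤ L * |x - y|) (x y : ℝ) :
    |w τ x - w τ y| ≤ (L + ε / K) * exp (K * τ) * |x - y| := by
  have hgron := norm_le_gronwallBound_of_norm_deriv_right_le (f := fun t => w t x - w t y)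
    ((hcont x).sub (hcont y)) (fun t ht => (hderiv x t ht).sub (hderiv y t ht)) (h0 x y)
    (fun t ht => hw' t ht x y) τ ⟨hτ, le_rfl⟩
  rw [gronwallBound_of_K_ne_0 hK.ne', sub_zero] at hgron
  have : 0 ≤ ε / K * |x - y| := by positivity
  calc |w τ x - w τ y| ≤ L * |x - y| * exp (K * τ) + ε * |x - y| / K * (exp (K * τ) - 1) :=
        hgron
    _ ≤ (L + ε / K) * exp (K * τ) * |x - y| := by
        rw [mul_sub, mul_one, mul_div_right_comm]; linarith

theorem abs_inv_add_one_sub_inv_add_one_le {p q : ℝ} (hp : 0 ≤ p) (hq : 0 ≤ q) :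
    |(p + 1)⁻¹ - (q + 1)⁻¹| ≤ |p - q| := by
  rw [inv_sub_inv (by positivity) (by positivity), abs_div,
    show q + 1 - (p + 1) = -(p - q) by ring, abs_neg]
  exact div_le_self (abs_nonneg _) (by rw [abs_of_pos (by positivity)]; nlinarith)

section ReciprocalField

variable {a α g : ℝ}

def reciprocalField (a α g φ w : ℝ) : ℝ := w * (1 - w) - g * (a * (1 - w) ^ 2 + α * φ * w ^ 2)

theorem HasDerivWithinAt.inv_add_one {v : ℝ → ℝ} {s : Set ℝ} {φ t : ℝ}
    (hv : HasDerivWithinAt v ((a * v t ^ 2 + α * φ) * g - v t) s t) (hvt : 0 ≤ v t) :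
    HasDerivWithinAt (fun r => (v r + 1)⁻¹) (reciprocalField a α g φ (v t + 1)⁻¹) s t := by
  have hvt' : v t + 1 ≠ 0 := by positivity
  refine ((hv.add_const 1).inv hvt').congr_deriv ?_
  unfold reciprocalField
  field_simp
  ring

theorem abs_reciprocalField_sub_le {M φ₁ φ₂ Φ w₁ w₂ : ℝ} (ha : 0 ≤ a) (hα : 0 ≤ α)
    (hg : g ∈ Icc 0 M) (hφ₁ : φ₁ ∈ Icc 0 Φ) (hw₁ : w₁ ∈ Icc 0 1) (hw₂ : w₂ ∈ Icc 0 1) :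
    |reciprocalField a α g φ₁ w₁ - reciprocalField a α g φ₂ w₂|
      ≤ (1 + 2 * a * M + 2 * α * M * Φ) * |w₁ - w₂| + α * M * |φ₁ - φ₂| := by
  obtain ⟨hg0, hgM⟩ := hg
  obtain ⟨hφ0, hφΦ⟩ := hφ₁
  have hM : 0 ≤ M := hg0.trans hgM
  have hΦ : 0 ≤ Φ := hφ0.trans hφΦ
  have hsum : 0 ≤ w₁ + w₂ := by linarith [hw₁.1, hw₂.1]
  have hsum' : w₁ + w₂ ≤ 2 := by linarith [hw₁.2, hw₂.2]
  set A := 1 - w₁ - w₂ + g * a * (2 - w₁ - w₂) - g * α * φ₁ * (w₁ + w₂)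
  have hsplit : reciprocalField a α g φ₁ w₁ - reciprocalField a α g φ₂ w₂
      = A * (w₁ - w₂) - g * α * w₂ ^ 2 * (φ₁ - φ₂) := by
    unfold reciprocalField; ring
  have hA : |A| ≤ 1 + 2 * a * M + 2 * α * M * Φ := by
    have hquad : 0 ≤ g * a * (2 - w₁ - w₂) := mul_nonneg (by positivity) (by linarith)
    have hquad' : g * a * (2 - w₁ - w₂) ≤ M * a * 2 :=
      mul_le_mul (by gcongr) (by linarith) (by linarith) (by positivity)
    have hsrc : 0 ≤ g * α * φ₁ * (w₁ + w₂) := by positivity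
    have hsrc' : g * α * φ₁ * (w₁ + w₂) ≤ M * α * Φ * 2 := by gcongr
    rw [abs_le]; constructor <;> linarith
  have hcoef : g * α * w₂ ^ 2 ≤ α * M := by
    have : w₂ ^ 2 ≤ 1 := pow_le_one₀ hw₂.1 hw₂.2
    calc g * α * w₂ ^ 2 ≤ M * α * 1 := by gcongr
      _ = α * M := by ring
  rw [hsplit]
  calc |A * (w₁ - w₂) - g * α * w₂ ^ 2 * (φ₁ - φ₂)|
      ≤ |A| * |w₁ - w₂| + g * α * w₂ ^ 2 * |φ₁ - φ₂| := by
        refine (abs_sub _ _).trans ?_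
        rw [abs_mul, abs_mul (g * α * w₂ ^ 2), abs_of_nonneg (by positivity : 0 ≤ g * α * w₂ ^ 2)]
    _ ≤ _ := by gcongr

end ReciprocalField

theorem abs_inv_add_one_sub_le_of_hasDerivWithinAt {a α M Φ τ : ℝ} {Lf L₀ : ℝ≥0}
    {f g : ℝ → ℝ} {u : ℝ → ℝ → ℝ} (ha : 0 ≤ a) (hα : 0 ≤ α) (hM : 0 ≤ M) (hτ : 0 ≤ τ)
    (hf : ∀ x, f x ∈ Icc 0 Φ) (hfL : LipschitzWith Lf f) (hg : ∀ t ∈ Ico 0 τ, g t ∈ Icc 0 M)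
    (hu : ∀ t ∈ Icc 0 τ, ∀ x, 0 ≤ u t x) (hu0 : LipschitzWith L₀ (u 0))
    (hcont : ∀ x, ContinuousOn (fun t => u t x) (Icc 0 τ))
    (hderiv : ∀ x, ∀ t ∈ Ico 0 τ,
      HasDerivWithinAt (fun s => u s x) ((a * u t x ^ 2 + α * f x) * g t - u t x) (Ici t) t)
    (x y : ℝ) :
    |(u τ x + 1)⁻¹ - (u τ y + 1)⁻¹|
      ≤ (L₀ + α * M * Lf / (1 + 2 * a * M + 2 * α * M * Φ))
        * exp ((1 + 2 * a * M + 2 * α * M * Φ) * τ) * |x - y| := by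
  have hΦ : 0 ≤ Φ := (hf 0).1.trans (hf 0).2
  have hw : ∀ t ∈ Icc 0 τ, ∀ x, (u t x + 1)⁻¹ ∈ Icc 0 1 := fun t ht x =>
    ⟨by have := hu t ht x; positivity, inv_le_one_of_one_le₀ (by linarith [hu t ht x])⟩
  refine abs_sub_le_mul_exp_of_hasDerivWithinAt
    (w := fun t x => (u t x + 1)⁻¹) (w' := fun t x => reciprocalField a α (g t) (f x) (u t x + 1)⁻¹)
    (by positivity) (by positivity) hτ
    (fun x => ((hcont x).add continuousOn_const).inv₀ fun t ht =>
      (by have := hu t ht x; positivity : u t x + 1 ≠ 0))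
    (fun x t ht => (hderiv x t ht).inv_add_one (hu t (Ico_subset_Icc_self ht) x))
    (fun t ht x y => ?_) (fun x y => ?_) x y
  · have hfxy : |f x - f y| ≤ Lf * |x - y| := by
      simpa only [Real.dist_eq] using hfL.dist_le_mul x y
    refine (abs_reciprocalField_sub_le ha hα (hg t ht) (hf x) (hw t (Ico_subset_Icc_self ht) x)
      (hw t (Ico_subset_Icc_self ht) y)).trans ?_
    rw [mul_assoc (α * M)]
    gcongr
  · have h0 : (0 : ℝ) ∈ Icc 0 τ := ⟨le_rfl, hτ⟩
    refine (abs_inv_add_one_sub_inv_add_one_le (hu 0 h0 x) (hu 0 h0 y)).trans ?_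
    simpa only [Real.dist_eq] using hu0.dist_le_mul x y

theorem exists_abs_inv_add_one_sub_le {a α M Φ T : ℝ} {Lf L₀ : ℝ≥0}
    {f g : ℝ → ℝ} {u : ℝ → ℝ → ℝ} (ha : 0 ≤ a) (hα : 0 ≤ α) (hM : 0 ≤ M)
    (hf : ∀ x, f x ∈ Icc 0 Φ) (hfL : LipschitzWith Lf f) (hg : ∀ t ∈ Ico 0 T, g t ∈ Icc 0 M)
    (hu : ∀ t ∈ Ico 0 T, ∀ x, 0 ≤ u t x) (hu0 : LipschitzWith L₀ (u 0))
    (hcont : ∀ x, ContinuousOn (fun t => u t x) (Ico 0 T))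
    (hderiv : ∀ x, ∀ t ∈ Ico 0 T,
      HasDerivWithinAt (fun s => u s x) ((a * u t x ^ 2 + α * f x) * g t - u t x) (Ici t) t) :
    ∃ B > 0, ∀ t ∈ Ico 0 T, ∀ x y, |(u t x + 1)⁻¹ - (u t y + 1)⁻¹| ≤ B * |x - y| := by
  have hΦ : 0 ≤ Φ := (hf 0).1.trans (hf 0).2
  set K := 1 + 2 * a * M + 2 * α * M * Φ
  refine ⟨(L₀ + α * M * Lf / K) * exp (K * T) + 1, by positivity, fun t ht x y => ?_⟩
  have hsub : Icc 0 t ⊆ Ico 0 T := fun s hs => ⟨hs.1, hs.2.trans_lt ht.2⟩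
  have hsub' : Ico 0 t ⊆ Ico 0 T := Ico_subset_Icc_self.trans hsub
  refine (abs_inv_add_one_sub_le_of_hasDerivWithinAt ha hα hM ht.1 hf hfL
    (fun s hs => hg s (hsub' hs)) (fun s hs => hu s (hsub hs)) hu0
    (fun x => (hcont x).mono hsub) (fun x s hs => hderiv x s (hsub' hs)) x y).trans ?_
  refine mul_le_mul_of_nonneg_right (le_add_of_le_of_nonneg ?_ zero_le_one) (abs_nonneg _)
  gcongr
  exact ht.2.le

theorem intervalIntegral_inv_add_mul_sub {c B : ℝ} (hc : 0 < c) (hB : 0 < B) (x : ℝ) :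
    ∫ y in x..x + 1, (c + B * (y - x))⁻¹ = log ((c + B) / c) / B := by
  have h := intervalIntegral.integral_comp_mul_add (a := x) (b := x + 1) (fun y : ℝ => y⁻¹)
    hB.ne' (c - B * x)
  rw [smul_eq_mul, show B * x + (c - B * x) = c by ring,
    show B * (x + 1) + (c - B * x) = c + B by ring, integral_inv_of_pos hc (by linarith),
    ← div_eq_inv_mul] at h
  convert h using 3
  ring

theorem add_one_le_of_integral_le {v : ℝ → ℝ} {x B M : ℝ} (hB : 0 < B)
    (hv : IntervalIntegrable v volume x (x + 1)) (hpos : ∀ y ∈ Icc x (x + 1), 0 ≤ v y)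
    (hW : ∀ y ∈ Icc x (x + 1), (v y + 1)⁻¹ ≤ (v x + 1)⁻¹ + B * (y - x))
    (hmass : ∫ y in x..x + 1, v y ≤ M) :
    v x + 1 ≤ (exp (B * (M + 1)) - 1) / B := by
  have hvx : 0 < v x + 1 := by linarith [hpos x ⟨le_rfl, by linarith⟩]
  set c := (v x + 1)⁻¹ with hc
  have hc0 : 0 < c := inv_pos.mpr hvx
  have hcone : ∀ y ∈ Icc x (x + 1), 0 < c + B * (y - x) := fun y hy =>
    add_pos_of_pos_of_nonneg hc0 (mul_nonneg hB.le (sub_nonneg.2 hy.1))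
  have hlow : ∀ y ∈ Icc x (x + 1), (c + B * (y - x))⁻¹ - 1 ≤ v y := fun y hy => by
    have := inv_anti₀ (inv_pos.mpr (by linarith [hpos y hy])) (hW y hy)
    rw [inv_inv] at this
    linarith
  have hcone_int : IntervalIntegrable (fun y => (c + B * (y - x))⁻¹) volume x (x + 1) := by
    refine ContinuousOn.intervalIntegrable ?_
    rw [uIcc_of_le (by linarith)]
    exact ContinuousOn.inv₀ (by fun_prop) fun y hy => (hcone y hy).ne'
  have hlog : log ((c + B) / c) / B - 1 ≤ M := by
    calc log ((c + B) / c) / B - 1 = ∫ y in x..x + 1, ((c + B * (y - x))⁻¹ - 1) := by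
          rw [intervalIntegral.integral_sub hcone_int intervalIntegrable_const,
            intervalIntegral_inv_add_mul_sub hc0 hB]
          simp
      _ ≤ ∫ y in x..x + 1, v y :=
          intervalIntegral.integral_mono_on (by linarith) (hcone_int.sub intervalIntegrable_const)
            hv hlow
      _ ≤ M := hmass
  have hexp : (c + B) / c ≤ exp (B * (M + 1)) := by
    rw [← log_le_iff_le_exp (by positivity)]
    have := (div_le_iff₀ hB).mp (by linarith : log ((c + B) / c) / B ≤ M + 1)
    linarith
  have hratio : (c + B) / c = 1 + (v x + 1) * B := by
    rw [hc]; field_simp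
  rw [le_div_iff₀ hB]
  linarith

theorem Function.Periodic.add_one_le_of_abs_inv_add_one_sub_le {v : ℝ → ℝ} {B M : ℝ}
    (hp : Function.Periodic v 1) (hv : Continuous v) (hpos : ∀ x, 0 ≤ v x) (hB : 0 < B)
    (hW : ∀ x y, |(v x + 1)⁻¹ - (v y + 1)⁻¹| ≤ B * |x - y|) (hmass : ∫ y in (0:ℝ)..1, v y ≤ M)
    (x : ℝ) : v x + 1 ≤ (exp (B * (M + 1)) - 1) / B := by
  refine add_one_le_of_integral_le hB (hv.intervalIntegrable _ _) (fun y _ => hpos y)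
    (fun y hy => ?_) (by rwa [hp.intervalIntegral_add_eq x 0, zero_add])
  have := (abs_le.mp (hW y x)).2
  rw [abs_of_nonneg (sub_nonneg.2 hy.1)] at this
  linarith

/-- global `L^∞` bound for the 1D diffusionless equation on `[0,T)`,
`T ∈ (0,∞)`: `sup_{(t,x) ∈ [0,T) × ℝ} u(t,x) < ∞`. -/
theorem no_blowup_Linfty_1d_no_diffusion
    (a α M T : ℝ) (ha : 0 < a) (hα : 0 ≤ α) (hM : 0 < M) (hT : 0 < T)
    (f : ℝ → ℝ) (hf : ContDiff ℝ (⊤ : ℕ∞) f)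
    (hf0 : ∀ x, 0 ≤ f x)
    (hfper : ∀ x, f (x + 1) = f x)
    (u : ℝ → ℝ → ℝ)
    (hu : ContDiffOn ℝ (⊤ : ℕ∞) (fun p : ℝ × ℝ => u p.1 p.2) (Set.Ico 0 T ×ˢ Set.univ))
    (huper : ∀ t ∈ Set.Ico 0 T, ∀ x, u t (x + 1) = u t x)
    (hupos : ∀ t ∈ Set.Ico 0 T, ∀ x, 0 ≤ u t x)
    (hmass0 : ∀ t ∈ Set.Ico 0 T, 0 ≤ ∫ x in (0:ℝ)..1, u t x)
    (hmassM : ∀ t ∈ Set.Ico 0 T, (∫ x in (0:ℝ)..1, u t x) ≤ M)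
    (hPDE : ∀ t ∈ Set.Ico 0 T, ∀ x,
      derivWithin (fun s => u s x) (Set.Ici 0) t
        = (a * u t x ^ 2 + α * f x) * (M - ∫ y in (0:ℝ)..1, u t y) - u t x)
    :
    ∃ C : ℝ, ∀ t ∈ Set.Ico 0 T, ∀ x : ℝ, u t x ≤ C := by
  have h0T : (0 : ℝ) ∈ Ico 0 T := ⟨le_rfl, hT⟩
  have hu_t : ∀ x, ContDiffOn ℝ (⊤ : ℕ∞) (fun t => u t x) (Ico 0 T) := fun x =>
    hu.comp (contDiff_id.prodMk contDiff_const).contDiffOn fun t ht => ⟨ht, mem_univ _⟩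
  have hu_x : ∀ t ∈ Ico 0 T, ContDiff ℝ (⊤ : ℕ∞) (u t) := fun t ht => contDiffOn_univ.mp <|
    hu.comp (contDiff_const.prodMk contDiff_id).contDiffOn fun x _ => ⟨ht, mem_univ _⟩
  have hderiv : ∀ x, ∀ t ∈ Ico 0 T, HasDerivWithinAt (fun s => u s x)
      ((a * u t x ^ 2 + α * f x) * (M - ∫ y in (0:ℝ)..1, u t y) - u t x) (Ici t) t :=
    fun x t ht => hPDE t ht x ▸ ((hu_t x).differentiableOn (by simp)).hasDerivWithinAt_Ici_of_Ico ht
  have hg : ∀ t ∈ Ico 0 T, M - ∫ y in (0:ℝ)..1, u t y ∈ Icc 0 M := fun t ht =>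
    ⟨sub_nonneg.2 (hmassM t ht), by linarith [hmass0 t ht]⟩
  obtain ⟨Φ, hΦ⟩ := Function.Periodic.exists_abs_le hfper one_ne_zero hf.continuous
  obtain ⟨Lf, hLf⟩ := Function.Periodic.exists_lipschitzWith hfper one_ne_zero (hf.of_le (by simp))
  obtain ⟨L₀, hL₀⟩ := Function.Periodic.exists_lipschitzWith (huper 0 h0T) one_ne_zero
    ((hu_x 0 h0T).of_le (by simp))
  obtain ⟨B, hB, hW⟩ := exists_abs_inv_add_one_sub_le ha.le hα hM.le
    (fun x => ⟨hf0 x, (le_abs_self _).trans (hΦ x)⟩) hLf hg hupos hL₀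
    (fun x => (hu_t x).continuousOn) hderiv
  refine ⟨(exp (B * (M + 1)) - 1) / B, fun t ht x => ?_⟩
  have := Function.Periodic.add_one_le_of_abs_inv_add_one_sub_le (huper t ht)
    (hu_x t ht).continuous (hupos t ht) hB (hW t ht) (hmassM t ht) x
  linarith
end

section
/- Let T ∈ (0, ∞), let u be an admissible solution of the 1D diffusionless equation on [0,T), and define ρ(t,x) = e^{−t}/(1 + u(t,x)). Then the first spatial derivative of ρ is bounded up to time T: sup over (t,x) ∈ [0,T) × ℝ of |∂ₓρ(t,x)| is finite. -/
/-!
Along each line `x = const`, `Φ(t) = ∂ₓρ(t,x) = -e^{-t} ∂ₓu / (1 + u)²` solves a linear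
equation `Φ' = c Φ - r`, found by differentiating the equation in `x` and exchanging `∂ₜ`
and `∂ₓ`. Since `u ≥ 0` and `0 ≤ M - U ≤ M`, both `c` and `r` are bounded by constants that
depend only on `a`, `α`, `M` and the sup norms of the periodic functions `f` and `f'`.
Grönwall's inequality then bounds `Φ` on `[0, T)` in terms of its initial value, which is
periodic and hence bounded.
-/

open MeasureTheory Set

/-- The transformed quantity `ρ(t,x) = e^{-t} / (1 + u(t,x))`. -/
noncomputable def rho (u : ℝ → ℝ → ℝ) (t x : ℝ) : ℝ :=
  Real.exp (-t) / (1 + u t x)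

open Function Topology

theorem Function.Periodic.deriv {g : ℝ → ℝ} {c : ℝ} (hg : Periodic g c) :
    Periodic (deriv g) c := fun x => by
  rw [← deriv_comp_add_const, show (fun y => g (y + c)) = g from funext hg]

theorem Function.Periodic.exists_forall_abs_le {g : ℝ → ℝ} {c : ℝ} (hg : Periodic g c)
    (hc : c ≠ 0) (hcont : Continuous g) : ∃ C, ∀ x, |g x| ≤ C := by
  obtain ⟨C, hC⟩ := (hg.isBounded_of_continuous hc hcont).exists_norm_le
  exact ⟨C, fun x => hC _ (mem_range_self x)⟩

theorem norm_le_gronwallBound_of_hasDerivWithinAt_Ico {E : Type*} [NormedAddCommGroup E]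
    [NormedSpace ℝ E] {f f' : ℝ → E} {δ K ε a b : ℝ}
    (hf : ∀ x ∈ Ico a b, HasDerivWithinAt f (f' x) (Ico a b) x) (ha : ‖f a‖ ≤ δ)
    (bound : ∀ x ∈ Ico a b, ‖f' x‖ ≤ K * ‖f x‖ + ε) :
    ∀ x ∈ Ico a b, ‖f x‖ ≤ gronwallBound δ K ε (x - a) := by
  intro x hx
  have hsub : Icc a x ⊆ Ico a b := Icc_subset_Ico_right hx.2
  refine norm_le_gronwallBound_of_norm_deriv_right_le (b := x)
    (fun y hy => (hf y (hsub hy)).continuousWithinAt.mono hsub)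
    (fun y hy => (hf y (hsub (Ico_subset_Icc_self hy))).mono_of_mem_nhdsWithin
      (Ico_mem_nhdsGE_of_mem (hsub (Ico_subset_Icc_self hy))))
    ha (fun y hy => bound y (hsub (Ico_subset_Icc_self hy))) x ⟨hx.1, le_rfl⟩

section Slices

variable {E : Type*} [NormedAddCommGroup E] [NormedSpace ℝ E]
  {Φ : ℝ × ℝ → E} {D : ℝ × ℝ →L[ℝ] E} {S : Set (ℝ × ℝ)} {I : Set ℝ} {t x : ℝ}

theorem HasFDerivWithinAt.hasDerivAt_slice_snd (h : HasFDerivWithinAt Φ D S (t, x))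
    (hS : ∀ y, (t, y) ∈ S) : HasDerivAt (fun y => Φ (t, y)) (D (0, 1)) x := by
  rw [← hasDerivWithinAt_univ]
  exact h.comp_hasDerivWithinAt x
    ((hasDerivAt_const x t).prodMk (hasDerivAt_id x)).hasDerivWithinAt fun y _ => hS y

theorem HasFDerivWithinAt.hasDerivWithinAt_slice_fst (h : HasFDerivWithinAt Φ D S (t, x))
    (hS : ∀ s ∈ I, (s, x) ∈ S) : HasDerivWithinAt (fun s => Φ (s, x)) (D (1, 0)) I t :=
  h.comp_hasDerivWithinAt t ((hasDerivAt_id t).prodMk (hasDerivAt_const t x)).hasDerivWithinAt hS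

end Slices

section CurriedSlices

variable {u : ℝ → ℝ → ℝ} {a b t x : ℝ}

theorem contDiff_slice_snd {n : WithTop ℕ∞} {I : Set ℝ}
    (hu : ContDiffOn ℝ n (fun p : ℝ × ℝ => u p.1 p.2) (I ×ˢ univ)) (ht : t ∈ I) :
    ContDiff ℝ n (u t) :=
  contDiffOn_univ.mp <|
    hu.comp (contDiff_const.prodMk contDiff_id).contDiffOn fun y _ => ⟨ht, mem_univ y⟩

theorem Ico_mem_nhdsWithin_Ici_of_mem (ht : t ∈ Ico a b) : Ico a b ∈ 𝓝[Ici a] t := by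
  rw [← Ici_inter_Iio]
  exact inter_mem_nhdsWithin _ (Iio_mem_nhds ht.2)

theorem hasDerivWithinAt_derivWithin_Ici_slice
    (hu : DifferentiableOn ℝ (fun p : ℝ × ℝ => u p.1 p.2) (Ico a b ×ˢ univ)) (ht : t ∈ Ico a b) :
    HasDerivWithinAt (fun s => u s x) (derivWithin (fun s => u s x) (Ici a) t)
      (Ico a b) t := by
  have h := (hu _ ⟨ht, mem_univ x⟩).hasFDerivWithinAt.hasDerivWithinAt_slice_fst
    (I := Ico a b) fun s hs => ⟨hs, mem_univ x⟩
  rwa [((h.mono_of_mem_nhdsWithin (Ico_mem_nhdsWithin_Ici_of_mem ht)).derivWithin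
    (uniqueDiffOn_Ici a t ht.1))]

/-- Schwarz's theorem for the slices of `u`: the time derivative of `∂ₓu` is the space
derivative of `∂ₜu`, where `∂ₜu` is a one-sided derivative at the left end `t = a`. -/
theorem hasDerivWithinAt_deriv_slice_snd (hab : a < b)
    (hu : ContDiffOn ℝ 2 (fun p : ℝ × ℝ => u p.1 p.2) (Ico a b ×ˢ univ)) (ht : t ∈ Ico a b) :
    HasDerivWithinAt (fun s => deriv (u s) x)
      (deriv (fun y => derivWithin (fun s => u s y) (Ici a) t) x) (Ico a b) t := by
  set S := Ico a b ×ˢ (univ : Set ℝ)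
  set G : ℝ × ℝ → ℝ := fun p => u p.1 p.2
  have hS : UniqueDiffOn ℝ S := (uniqueDiffOn_Ico a b).prod uniqueDiffOn_univ
  have hmem : ∀ s ∈ Ico a b, ∀ y, (s, y) ∈ S := fun s hs y => ⟨hs, mem_univ y⟩
  set F := fderivWithin ℝ G S
  set F' := fderivWithin ℝ F S
  have hG : DifferentiableOn ℝ G S := hu.differentiableOn two_ne_zero
  have hF : DifferentiableOn ℝ F S :=
    (hu.fderivWithin (m := 1) hS (by norm_num)).differentiableOn one_ne_zero
  have hF' := (hF _ (hmem t ht x)).hasFDerivWithinAt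
  have hux : ∀ s ∈ Ico a b, deriv (u s) x = F (s, x) (0, 1) := fun s hs =>
    ((hG _ (hmem s hs x)).hasFDerivWithinAt.hasDerivAt_slice_snd (hmem s hs)).deriv
  have hut : (fun y => derivWithin (fun s => u s y) (Ici a) t) = fun y => F (t, y) (1, 0) := by
    funext y
    exact (uniqueDiffOn_Ico a b t ht).eq_deriv _
      (hasDerivWithinAt_derivWithin_Ici_slice (hu.differentiableOn two_ne_zero) ht)
      ((hG _ (hmem t ht y)).hasFDerivWithinAt.hasDerivWithinAt_slice_fst (hmem · · y))
  have hsymm : F' (t, x) (1, 0) (0, 1) = F' (t, x) (0, 1) (1, 0) := by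
    have hcl : (t, x) ∈ closure (interior S) := by
      rw [interior_prod_eq, interior_Ico, interior_univ, closure_prod_eq, closure_Ioo hab.ne,
        closure_univ]
      exact ⟨⟨ht.1, ht.2.le⟩, mem_univ x⟩
    exact (hu _ (hmem t ht x)).isSymmSndFDerivWithinAt (by simp) hS hcl (hmem t ht x) _ _
  have hspace : HasDerivAt (fun y => F (t, y) (1, 0)) (F' (t, x) (0, 1) (1, 0)) x := by
    simpa using (hF'.hasDerivAt_slice_snd (hmem t ht)).clm_apply (hasDerivAt_const x (1, 0))
  have htime : HasDerivWithinAt (fun s => F (s, x) (0, 1))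
      (F' (t, x) (1, 0) (0, 1)) (Ico a b) t := by
    simpa using (hF'.hasDerivWithinAt_slice_fst (hmem · · x)).clm_apply
      (hasDerivWithinAt_const t _ (0, 1))
  rw [hut, hspace.deriv, ← hsymm]
  exact htime.congr hux (hux t ht)

end CurriedSlices

theorem deriv_rho {u : ℝ → ℝ → ℝ} {t x w : ℝ} (hu : HasDerivAt (u t) w x)
    (hne : 1 + u t x ≠ 0) : deriv (rho u t) x = -Real.exp (-t) * w / (1 + u t x) ^ 2 := by
  have h : HasDerivAt (rho u t) _ x :=
    (hasDerivAt_const x (Real.exp (-t))).div (hu.const_add 1) hne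
  rw [h.deriv]
  ring

/-- If `p` and `w` evolve like `u` and `∂ₓu` along the equation, then `-e^{-s} w / (1 + p)²`
(which is `∂ₓρ`) solves a linear equation `Φ' = c Φ - r`. -/
theorem hasDerivWithinAt_neg_exp_mul_div_one_add_sq {p w : ℝ → ℝ} {S : Set ℝ}
    {s a α B φ φ' : ℝ}
    (hp : HasDerivWithinAt p ((a * p s ^ 2 + α * φ) * B - p s) S s)
    (hw : HasDerivWithinAt w ((2 * a * p s * w s + α * φ') * B - w s) S s)
    (hne : 1 + p s ≠ 0) :
    HasDerivWithinAt (fun r => -Real.exp (-r) * w r / (1 + p r) ^ 2)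
      (2 * (a * B * p s - 1 - α * φ * B) / (1 + p s) * (-Real.exp (-s) * w s / (1 + p s) ^ 2)
        - α * B * φ' * Real.exp (-s) / (1 + p s) ^ 2) S s := by
  have hexp : HasDerivAt (fun r => Real.exp (-r)) (-Real.exp (-s)) s := by
    simpa using (hasDerivAt_neg s).exp
  have h : HasDerivWithinAt (fun r => -Real.exp (-r) * w r / (1 + p r) ^ 2) _ S s :=
    ((hexp.hasDerivWithinAt.neg).mul hw).div ((hp.const_add 1).pow 2) (pow_ne_zero 2 hne)
  refine h.congr_deriv ?_
  simp only [Pi.neg_apply, Pi.mul_apply]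
  field_simp
  ring

theorem abs_two_mul_div_one_add_le {a α B M φ F p : ℝ} (ha : 0 ≤ a) (hα : 0 ≤ α)
    (hB : B ∈ Icc 0 M) (hφ : φ ∈ Icc 0 F) (hp : 0 ≤ p) :
    |2 * (a * B * p - 1 - α * φ * B) / (1 + p)| ≤ 2 * (a * M + 1 + α * F * M) := by
  obtain ⟨hB0, hBM⟩ := hB
  obtain ⟨hφ0, hφF⟩ := hφ
  have hM : 0 ≤ M := hB0.trans hBM
  have hF : 0 ≤ F := hφ0.trans hφF
  have hq : 0 < 1 + p := by linarith
  have hBp : a * B * p ≤ a * M * (1 + p) := by gcongr; linarith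
  have hφB : α * φ * B ≤ α * F * M * (1 + p) :=
    calc α * φ * B ≤ α * F * M := by gcongr
      _ ≤ α * F * M * (1 + p) := le_mul_of_one_le_right (by positivity) (by linarith)
  rw [abs_div, abs_of_pos hq, div_le_iff₀ hq, abs_le]
  have : 0 ≤ a * B * p := by positivity
  have : 0 ≤ α * φ * B := by positivity
  constructor <;> linarith

theorem abs_mul_mul_exp_div_one_add_sq_le {α B M φ' F' s p : ℝ} (hα : 0 ≤ α) (hB : B ∈ Icc 0 M)
    (hφ' : |φ'| ≤ F') (hs : 0 ≤ s) (hp : 0 ≤ p) :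
    |α * B * φ' * Real.exp (-s) / (1 + p) ^ 2| ≤ α * M * F' := by
  have hq : 1 ≤ (1 + p) ^ 2 := one_le_pow₀ (by linarith)
  have he : Real.exp (-s) ≤ 1 := Real.exp_le_one_iff.2 (by linarith)
  rw [abs_div, abs_of_pos (by positivity : (0 : ℝ) < (1 + p) ^ 2), div_le_iff₀ (by positivity),
    abs_mul, abs_mul, abs_mul, abs_of_nonneg hα, abs_of_nonneg hB.1,
    abs_of_pos (Real.exp_pos _)]
  have hF' : 0 ≤ F' := (abs_nonneg φ').trans hφ'
  have hM : 0 ≤ M := hB.1.trans hB.2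
  calc α * B * |φ'| * Real.exp (-s) ≤ α * M * F' * 1 := by gcongr; exact hB.2
    _ ≤ α * M * F' * (1 + p) ^ 2 := by gcongr

theorem abs_rate_le {a α B M φ F φ' F' s p X : ℝ} (ha : 0 ≤ a) (hα : 0 ≤ α)
    (hB : B ∈ Icc 0 M) (hφ : φ ∈ Icc 0 F) (hφ' : |φ'| ≤ F') (hs : 0 ≤ s) (hp : 0 ≤ p) :
    |2 * (a * B * p - 1 - α * φ * B) / (1 + p) * X - α * B * φ' * Real.exp (-s) / (1 + p) ^ 2|
      ≤ 2 * (a * M + 1 + α * F * M) * |X| + α * M * F' :=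
  calc _ ≤ |2 * (a * B * p - 1 - α * φ * B) / (1 + p)| * |X|
        + |α * B * φ' * Real.exp (-s) / (1 + p) ^ 2| := by rw [← abs_mul]; exact abs_sub _ _
    _ ≤ _ := by
      gcongr
      exacts [abs_two_mul_div_one_add_le ha hα hB hφ hp,
        abs_mul_mul_exp_div_one_add_sq_le hα hB hφ' hs hp]

theorem exists_forall_abs_deriv_rho_le {u : ℝ → ℝ → ℝ} {t c : ℝ} (hu : ContDiff ℝ 1 (u t))
    (hper : Periodic (u t) c) (hc : c ≠ 0) (hpos : ∀ x, 0 ≤ u t x) :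
    ∃ C, ∀ x, |deriv (rho u t) x| ≤ C := by
  have hρ : ContDiff ℝ 1 (rho u t) :=
    contDiff_const.div (contDiff_const.add hu) fun x => by linarith [hpos x]
  refine Periodic.deriv (fun x => ?_) |>.exists_forall_abs_le hc (hρ.continuous_deriv le_rfl)
  simp only [rho, hper x]

theorem hasDerivWithinAt_deriv_rho {a α T s x : ℝ} {f B : ℝ → ℝ} {u : ℝ → ℝ → ℝ} (hT : 0 < T)
    (hf : Differentiable ℝ f)
    (hu : ContDiffOn ℝ 2 (fun p : ℝ × ℝ => u p.1 p.2) (Ico 0 T ×ˢ univ))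
    (hupos : ∀ t ∈ Ico 0 T, ∀ x, 0 ≤ u t x)
    (hPDE : ∀ t ∈ Ico 0 T, ∀ x,
      derivWithin (fun s => u s x) (Ici 0) t = (a * u t x ^ 2 + α * f x) * B t - u t x)
    (hs : s ∈ Ico 0 T) :
    HasDerivWithinAt (fun t => deriv (rho u t) x)
      (2 * (a * B s * u s x - 1 - α * f x * B s) / (1 + u s x) * deriv (rho u s) x
        - α * B s * deriv f x * Real.exp (-s) / (1 + u s x) ^ 2) (Ico 0 T) s := by
  have hux : ∀ t ∈ Ico 0 T, ∀ y, HasDerivAt (u t) (deriv (u t) y) y := fun t ht y =>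
    ((contDiff_slice_snd hu ht).differentiable two_ne_zero y).hasDerivAt
  have hne : ∀ t ∈ Ico 0 T, 1 + u t x ≠ 0 := fun t ht => by linarith [hupos t ht x]
  have hp : HasDerivWithinAt (fun t => u t x) ((a * u s x ^ 2 + α * f x) * B s - u s x)
      (Ico 0 T) s :=
    hPDE s hs x ▸ hasDerivWithinAt_derivWithin_Ici_slice (hu.differentiableOn two_ne_zero) hs
  have hw : HasDerivWithinAt (fun t => deriv (u t) x)
      ((2 * a * u s x * deriv (u s) x + α * deriv f x) * B s - deriv (u s) x) (Ico 0 T) s := by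
    have hR : HasDerivAt (fun y => (a * u s y ^ 2 + α * f y) * B s - u s y)
        ((2 * a * u s x * deriv (u s) x + α * deriv f x) * B s - deriv (u s) x) x := by
      have h := (((((hux s hs x).pow 2).const_mul a).add ((hf x).hasDerivAt.const_mul α)).mul_const
        (B s)).sub (hux s hs x)
      exact h.congr_deriv (by push_cast; ring)
    have h := hasDerivWithinAt_deriv_slice_snd (x := x) hT hu hs
    rwa [show (fun y => derivWithin (fun s => u s y) (Ici 0) s) = _ from funext (hPDE s hs),
      hR.deriv] at h
  rw [deriv_rho (hux s hs x) (hne s hs)]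
  exact (hasDerivWithinAt_neg_exp_mul_div_one_add_sq hp hw (hne s hs)).congr
    (fun t ht => deriv_rho (hux t ht x) (hne t ht)) (deriv_rho (hux s hs x) (hne s hs))

theorem rho_first_derivative_bounded_general
    (a α M T : ℝ) (ha : 0 < a) (hα : 0 ≤ α) (hT : 0 < T)
    (f : ℝ → ℝ) (hf : ContDiff ℝ (⊤ : ℕ∞) f)
    (hf0 : ∀ x, 0 ≤ f x)
    (hfper : ∀ x, f (x + 1) = f x)
    (u : ℝ → ℝ → ℝ)
    (hu : ContDiffOn ℝ (⊤ : ℕ∞) (fun p : ℝ × ℝ => u p.1 p.2) (Set.Ico 0 T ×ˢ Set.univ))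
    (huper : ∀ t ∈ Set.Ico 0 T, ∀ x, u t (x + 1) = u t x)
    (hupos : ∀ t ∈ Set.Ico 0 T, ∀ x, 0 ≤ u t x)
    (hmass0 : ∀ t ∈ Set.Ico 0 T, 0 ≤ ∫ x in (0:ℝ)..1, u t x)
    (hmassM : ∀ t ∈ Set.Ico 0 T, (∫ x in (0:ℝ)..1, u t x) ≤ M)
    (hPDE : ∀ t ∈ Set.Ico 0 T, ∀ x,
      derivWithin (fun s => u s x) (Set.Ici 0) t
        = (a * u t x ^ 2 + α * f x) * (M - ∫ y in (0:ℝ)..1, u t y) - u t x)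
    :
    ∃ C : ℝ, ∀ t ∈ Set.Ico 0 T, ∀ x : ℝ, |deriv (rho u t) x| ≤ C := by
  have h0 : (0 : ℝ) ∈ Ico 0 T := ⟨le_rfl, hT⟩
  have hu2 : ContDiffOn ℝ 2 (fun p : ℝ × ℝ => u p.1 p.2) (Ico 0 T ×ˢ univ) :=
    hu.of_le (by norm_cast)
  set B : ℝ → ℝ := fun t => M - ∫ y in (0:ℝ)..1, u t y
  have hB : ∀ t ∈ Ico 0 T, B t ∈ Icc 0 M := fun t ht =>
    ⟨by linarith [hmassM t ht], by linarith [hmass0 t ht]⟩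
  obtain ⟨F, hF⟩ := Periodic.exists_forall_abs_le hfper one_ne_zero hf.continuous
  obtain ⟨F', hF'⟩ := Periodic.deriv hfper |>.exists_forall_abs_le one_ne_zero
    (hf.continuous_deriv (by simp))
  obtain ⟨δ, hδ⟩ := exists_forall_abs_deriv_rho_le
    ((contDiff_slice_snd hu2 h0).of_le one_le_two) (huper 0 h0) one_ne_zero (hupos 0 h0)
  have hM : 0 ≤ M := (hB 0 h0).1.trans (hB 0 h0).2
  have hF0 : 0 ≤ F := (abs_nonneg _).trans (hF 0)
  have hF'0 : 0 ≤ F' := (abs_nonneg _).trans (hF' 0)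
  refine ⟨gronwallBound δ (2 * (a * M + 1 + α * F * M)) (α * M * F') T, fun t ht x => ?_⟩
  calc |deriv (rho u t) x| ≤ gronwallBound δ (2 * (a * M + 1 + α * F * M)) (α * M * F') (t - 0) :=
        norm_le_gronwallBound_of_hasDerivWithinAt_Ico
          (fun s hs => hasDerivWithinAt_deriv_rho (B := B) hT (hf.differentiable (by simp)) hu2
            hupos hPDE hs) (hδ x)
          (fun s hs => abs_rate_le ha.le hα (hB s hs) ⟨hf0 x, (le_abs_self _).trans (hF x)⟩
            (hF' x) hs.1 (hupos s hs x)) t ht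
    _ ≤ _ := gronwallBound_mono ((abs_nonneg _).trans (hδ 0)) (by positivity) (by positivity)
        (by linarith [ht.2])

/-- the first spatial derivative of `ρ` is bounded up to the finite time `T`. -/
theorem rho_first_derivative_bounded
    (a α M T : ℝ) (ha : 0 < a) (hα : 0 ≤ α) (hM : 0 < M) (hT : 0 < T)
    (f : ℝ → ℝ) (hf : ContDiff ℝ (⊤ : ℕ∞) f)
    (hf0 : ∀ x, 0 ≤ f x)
    (hfper : ∀ x, f (x + 1) = f x)
    (u : ℝ → ℝ → ℝ)
    (hu : ContDiffOn ℝ (⊤ : ℕ∞) (fun p : ℝ × ℝ => u p.1 p.2) (Set.Ico 0 T ×ˢ Set.univ))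
    (huper : ∀ t ∈ Set.Ico 0 T, ∀ x, u t (x + 1) = u t x)
    (hupos : ∀ t ∈ Set.Ico 0 T, ∀ x, 0 ≤ u t x)
    (hmass0 : ∀ t ∈ Set.Ico 0 T, 0 ≤ ∫ x in (0:ℝ)..1, u t x)
    (hmassM : ∀ t ∈ Set.Ico 0 T, (∫ x in (0:ℝ)..1, u t x) ≤ M)
    (hPDE : ∀ t ∈ Set.Ico 0 T, ∀ x,
      derivWithin (fun s => u s x) (Set.Ici 0) t
        = (a * u t x ^ 2 + α * f x) * (M - ∫ y in (0:ℝ)..1, u t y) - u t x)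
    :
    ∃ C : ℝ, ∀ t ∈ Set.Ico 0 T, ∀ x : ℝ, |deriv (rho u t) x| ≤ C :=
  rho_first_derivative_bounded_general a α M T ha hα hT f hf hf0 hfper u hu huper hupos hmass0
    hmassM hPDE
end

section
/- Let T ∈ (0, ∞), let u be an admissible solution of the 1D diffusionless equation on [0,T), and define ρ(t,x) = e^{−t}/(1 + u(t,x)). Then all spatial derivatives of ρ are bounded up to time T: for every integer k ≥ 1, sup over (t,x) ∈ [0,T) × ℝ of |∂ₓᵏρ(t,x)| is finite. -/
/-!
Put `V = 1 / (1 + u)`, so that `ρ = e^{-t} V` and `0 < V ≤ 1`. In terms of `V` the equation is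
the Riccati equation `∂ₜV = c₀(t) + c₁(t) V + h(t,x) V²` with `c = M - U(t)`, `c₀ = -c a`,
`c₁ = 1 + 2 c a` and `h = -(1 + c a) - c α f(x)`; since `0 ≤ U ≤ M` and `f` is smooth and
periodic, `c₁` and all `x`-derivatives of `h` are bounded on `[0, T)`. As `∂ₜ` commutes with `∂ₓᵏ`,
the Leibniz rule gives `|∂ₜ∂ₓᵏV| ≤ K |∂ₓᵏV| + ε` with `K`, `ε` depending only on bounds for the
`∂ₓʲV`, `j < k`. By induction on `k`, Grönwall's inequality bounds `∂ₓᵏV` on `[T/2, T)`, while on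
`[0, T/2]` the bound comes from compactness and periodicity in `x`.
-/

open Set Filter Topology
open scoped ContDiff

theorem exists_forall_lt_of_monotone {P : ℕ → ℝ → Prop} (hP : ∀ j, Monotone (P j)) {k : ℕ}
    (h : ∀ j < k, ∃ C, P j C) : ∃ C, ∀ j < k, P j C := by
  induction k with
  | zero => exact ⟨0, fun j hj => absurd hj j.not_lt_zero⟩
  | succ k ih =>
    obtain ⟨C, hC⟩ := ih fun j hj => h j (by omega)
    obtain ⟨C', hC'⟩ := h k k.lt_succ_self
    refine ⟨max C C', fun j hj => ?_⟩
    rcases Nat.lt_succ_iff_lt_or_eq.1 hj with hj | rfl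
    · exact hP j (le_max_left _ _) (hC j hj)
    · exact hP j (le_max_right _ _) hC'

theorem Function.Periodic.iteratedDeriv {𝕜 F : Type*} [NontriviallyNormedField 𝕜]
    [NormedAddCommGroup F] [NormedSpace 𝕜 F] {f : 𝕜 → F} {c : 𝕜} (hf : Function.Periodic f c)
    (n : ℕ) : Function.Periodic (iteratedDeriv n f) c := fun x => by
  rw [← congrFun (iteratedDeriv_comp_add_const n f c) x, hf.funext]

theorem Function.Periodic.exists_norm_le_of_continuous {E : Type*} [SeminormedAddCommGroup E]
    {f : ℝ → E} {c : ℝ} (hf : Function.Periodic f c) (hc : c ≠ 0) (hcont : Continuous f) :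
    ∃ C, ∀ x, ‖f x‖ ≤ C := by
  obtain ⟨C, hC⟩ := isBounded_iff_forall_norm_le.1 (hf.isBounded_of_continuous hc hcont)
  exact ⟨C, fun x => hC _ (mem_range_self x)⟩

theorem exists_norm_le_of_continuousOn_of_periodic {E : Type*} [SeminormedAddCommGroup E]
    {W : ℝ × ℝ → E} {a b c : ℝ} (hc : 0 < c) (hW : ContinuousOn W (Icc a b ×ˢ univ))
    (hper : ∀ t ∈ Icc a b, Function.Periodic (fun x => W (t, x)) c) :
    ∃ C, ∀ t ∈ Icc a b, ∀ x, ‖W (t, x)‖ ≤ C := by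
  obtain ⟨C, hC⟩ := (isCompact_Icc.prod (isCompact_Icc (a := 0) (b := c))
    ).exists_bound_of_continuousOn (hW.mono (prod_mono subset_rfl (subset_univ _)))
  refine ⟨C, fun t ht x => ?_⟩
  obtain ⟨y, hy, hxy⟩ := (hper t ht).exists_mem_Ico₀ hc x
  rw [show W (t, x) = W (t, y) from hxy]
  exact hC (t, y) ⟨ht, Ico_subset_Icc_self hy⟩

theorem norm_le_gronwallBound_of_hasDerivAt {E : Type*} [NormedAddCommGroup E] [NormedSpace ℝ E]
    {φ φ' : ℝ → E} {a b δ K ε : ℝ} (hK : 0 ≤ K) (hε : 0 ≤ ε)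
    (hφ : ∀ s ∈ Ico a b, HasDerivAt φ (φ' s) s) (ha : ‖φ a‖ ≤ δ)
    (bound : ∀ s ∈ Ico a b, ‖φ' s‖ ≤ K * ‖φ s‖ + ε) :
    ∀ t ∈ Ico a b, ‖φ t‖ ≤ gronwallBound δ K ε (b - a) := by
  intro t ht
  have hsub : Icc a t ⊆ Ico a b := Icc_subset_Ico_right ht.2
  calc ‖φ t‖ ≤ gronwallBound δ K ε (t - a) :=
        norm_le_gronwallBound_of_norm_deriv_right_le
          (fun s hs => (hφ s (hsub hs)).continuousAt.continuousWithinAt)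
          (fun s hs => (hφ s (hsub (Ico_subset_Icc_self hs))).hasDerivWithinAt) ha
          (fun s hs => bound s (hsub (Ico_subset_Icc_self hs))) t ⟨ht.1, le_rfl⟩
    _ ≤ gronwallBound δ K ε (b - a) :=
        gronwallBound_mono ((norm_nonneg _).trans ha) hε hK (by linarith [ht.2])

theorem norm_iteratedDeriv_mul_le_of_forall {𝕜 A : Type*} [NontriviallyNormedField 𝕜]
    [NormedRing A] [NormedAlgebra 𝕜 A] {f g : 𝕜 → A} {n : ℕ} (hf : ContDiff 𝕜 n f)
    (hg : ContDiff 𝕜 n g) {x : 𝕜} {P : ℝ}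
    (h : ∀ i ≤ n, ‖iteratedDeriv i f x‖ * ‖iteratedDeriv (n - i) g x‖ ≤ P) :
    ‖iteratedDeriv n (fun y => f y * g y) x‖ ≤ 2 ^ n * P := by
  have hsum := norm_iteratedFDeriv_mul_le hf hg x le_rfl
  simp only [norm_iteratedFDeriv_eq_norm_iteratedDeriv] at hsum
  calc _ ≤ _ := hsum
    _ ≤ ∑ i ∈ Finset.range (n + 1), (n.choose i : ℝ) * P := by
        refine Finset.sum_le_sum fun i hi => ?_
        rw [mul_assoc]
        exact mul_le_mul_of_nonneg_left (h i (Nat.lt_succ_iff.1 (Finset.mem_range.1 hi)))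
          (Nat.cast_nonneg _)
    _ = 2 ^ n * P := by
        rw [← Finset.sum_mul, ← Nat.cast_sum, Nat.sum_range_choose, Nat.cast_pow, Nat.cast_ofNat]

theorem abs_iteratedDeriv_mul_self_le {g : ℝ → ℝ} {k : ℕ} (hk : k ≠ 0) (hg : ContDiff ℝ k g)
    {x B : ℝ} (hB : ∀ j < k, |iteratedDeriv j g x| ≤ B) {j : ℕ} (hj : j ≤ k) :
    |iteratedDeriv j (fun y => g y * g y) x| ≤ 2 ^ k * (B * (B + |iteratedDeriv k g x|)) := by
  set w := |iteratedDeriv k g x|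
  have hB₀ : 0 ≤ B := (abs_nonneg _).trans (hB 0 (Nat.pos_of_ne_zero hk))
  have hle : ∀ i ≤ k, |iteratedDeriv i g x| ≤ B + w := fun i hi =>
    hi.lt_or_eq.elim (fun hik => (hB i hik).trans (le_add_of_nonneg_right (abs_nonneg _)))
      (fun hik => hik ▸ le_add_of_nonneg_left hB₀)
  have hgj : ContDiff ℝ j g := hg.of_le (by exact_mod_cast hj)
  have hprod := norm_iteratedDeriv_mul_le_of_forall hgj hgj (x := x) (P := B * (B + w))
    fun i hi => by
      simp only [Real.norm_eq_abs]
      rcases Nat.lt_or_ge i k with hik | hik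
      · exact mul_le_mul (hB i hik) (hle (j - i) (by omega)) (abs_nonneg _) hB₀
      · rw [mul_comm B]
        exact mul_le_mul (hle i (by omega)) (hB (j - i) (by omega)) (abs_nonneg _)
          (by positivity)
  rw [Real.norm_eq_abs] at hprod
  exact hprod.trans (mul_le_mul_of_nonneg_right (pow_le_pow_right₀ one_le_two hj)
    (by positivity))

theorem abs_iteratedDeriv_riccati_le {g h : ℝ → ℝ} {k : ℕ} (hk : k ≠ 0) (hg : ContDiff ℝ k g)
    (hh : ContDiff ℝ k h) (c₀ c₁ : ℝ) {x B H : ℝ} (hB : ∀ j < k, |iteratedDeriv j g x| ≤ B)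
    (hH : ∀ j ≤ k, |iteratedDeriv j h x| ≤ H) :
    |iteratedDeriv k (fun y => c₀ + c₁ * g y + h y * g y ^ 2) x|
      ≤ (|c₁| + 4 ^ k * H * B) * |iteratedDeriv k g x| + 4 ^ k * H * B ^ 2 := by
  set w := |iteratedDeriv k g x|
  have hH₀ : 0 ≤ H := (abs_nonneg _).trans (hH 0 k.zero_le)
  have hexpand : iteratedDeriv k (fun y => c₀ + c₁ * g y + h y * g y ^ 2) x
      = c₁ * iteratedDeriv k g x + iteratedDeriv k (fun y => h y * (g y * g y)) x := by
    simp only [add_assoc, sq]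
    rw [iteratedDeriv_const_add (Nat.pos_of_ne_zero hk),
      iteratedDeriv_fun_add (contDiff_const.mul hg).contDiffAt (hh.mul (hg.mul hg)).contDiffAt,
      iteratedDeriv_const_mul_field]
  have hprod := norm_iteratedDeriv_mul_le_of_forall hh (hg.mul hg) (x := x)
    (P := H * (2 ^ k * (B * (B + w)))) fun i hi => by
      simp only [Real.norm_eq_abs]
      exact mul_le_mul (hH i hi) (abs_iteratedDeriv_mul_self_le hk hg hB (by omega))
        (abs_nonneg _) hH₀
  rw [Real.norm_eq_abs] at hprod
  have h4 : (4 : ℝ) ^ k = 2 ^ k * 2 ^ k := by rw [← mul_pow]; norm_num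
  rw [hexpand, h4]
  calc _ ≤ |c₁| * w + 2 ^ k * (H * (2 ^ k * (B * (B + w)))) := by
        refine (abs_add_le _ _).trans (add_le_add ?_ hprod)
        rw [abs_mul]
    _ = _ := by ring

section PartialDerivatives

variable {F : Type*} [NormedAddCommGroup F] [NormedSpace ℝ F]

theorem DifferentiableAt.hasDerivAt_partial_fst {G : ℝ × ℝ → F} {t x : ℝ}
    (h : DifferentiableAt ℝ G (t, x)) :
    HasDerivAt (fun s => G (s, x)) (fderiv ℝ G (t, x) (1, 0)) t :=
  h.hasFDerivAt.comp_hasDerivAt t ((hasDerivAt_id t).prodMk (hasDerivAt_const t x))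

theorem ContDiffOn.hasDerivAt_derivWithin_slice {n : WithTop ℕ∞} (hn : n ≠ 0) {I J : Set ℝ}
    {w : ℝ × ℝ → F} (hw : ContDiffOn ℝ n w (I ×ˢ univ)) {t : ℝ} (hI : I ∈ 𝓝 t) (hJ : J ∈ 𝓝 t)
    (x : ℝ) : HasDerivAt (fun s => w (s, x)) (derivWithin (fun s => w (s, x)) J t) t := by
  have hd := ((hw.contDiffAt (prod_mem_nhds hI univ_mem : I ×ˢ univ ∈ 𝓝 (t, x))
    ).differentiableAt hn).hasDerivAt_partial_fst
  rwa [derivWithin_of_mem_nhds hJ, hd.deriv]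

theorem ContDiffOn.contDiff_slice {n : WithTop ℕ∞} {I : Set ℝ} {V : ℝ × ℝ → F}
    (hV : ContDiffOn ℝ n V (I ×ˢ univ)) {t : ℝ} (ht : t ∈ I) : ContDiff ℝ n (fun y => V (t, y)) :=
  hV.comp_contDiff (contDiff_const.prodMk contDiff_id) fun y => ⟨ht, mem_univ y⟩

-- `∂ₓᵏ V`, taken within `W` so that it stays smooth up to the edge `t = 0` of `[0, T) × ℝ`.
noncomputable def iteratedPartialSnd (W : Set (ℝ × ℝ)) (V : ℝ × ℝ → F) : ℕ → ℝ × ℝ → F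
  | 0 => V
  | k + 1 => fun p => fderivWithin ℝ (iteratedPartialSnd W V k) W p (0, 1)

variable {W : Set (ℝ × ℝ)} {V : ℝ × ℝ → F}

theorem contDiffOn_iteratedPartialSnd (hW : UniqueDiffOn ℝ W) (hV : ContDiffOn ℝ ∞ V W)
    (k : ℕ) : ContDiffOn ℝ ∞ (iteratedPartialSnd W V k) W := by
  induction k with
  | zero => exact hV
  | succ k ih => exact (ih.fderivWithin hW (by simp)).clm_apply contDiffOn_const

theorem iteratedPartialSnd_eq_iteratedDeriv {I : Set ℝ} (hI : UniqueDiffOn ℝ I)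
    (hV : ContDiffOn ℝ ∞ V (I ×ˢ univ)) (k : ℕ) {t : ℝ} (ht : t ∈ I) (x : ℝ) :
    iteratedPartialSnd (I ×ˢ univ) V k (t, x) = iteratedDeriv k (fun y => V (t, y)) x := by
  induction k generalizing x with
  | zero => rfl
  | succ k ih =>
    rw [iteratedDeriv_succ, ← funext ih]
    have hdiff :
        DifferentiableWithinAt ℝ (iteratedPartialSnd (I ×ˢ univ) V k) (I ×ˢ univ) (t, x) :=
      (contDiffOn_iteratedPartialSnd (hI.prod uniqueDiffOn_univ) hV k).differentiableOn
        (by simp) _ ⟨ht, mem_univ x⟩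
    have hslice := hdiff.hasFDerivWithinAt.comp_hasDerivWithinAt x
      ((hasDerivAt_const x t).prodMk (hasDerivAt_id x)).hasDerivWithinAt
      (fun y _ => ⟨ht, mem_univ y⟩ : MapsTo (fun y : ℝ => (t, y)) univ (I ×ˢ univ))
    exact ((hasDerivWithinAt_univ.1 hslice).deriv).symm

theorem fderiv_iteratedPartialSnd_apply_fst {Ω : Set (ℝ × ℝ)} (hΩ : IsOpen Ω) (hΩW : Ω ⊆ W)
    (hW : UniqueDiffOn ℝ W) (hV : ContDiffOn ℝ ∞ V W) (k : ℕ) {p : ℝ × ℝ} (hp : p ∈ Ω) :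
    fderiv ℝ (iteratedPartialSnd W V k) p (1, 0)
      = iteratedPartialSnd Ω (fun q => fderiv ℝ V q (1, 0)) k p := by
  induction k generalizing p with
  | zero => rfl
  | succ k ih =>
    set G := iteratedPartialSnd W V k
    have hWnhds : ∀ q ∈ Ω, W ∈ 𝓝 q := fun q hq => mem_of_superset (hΩ.mem_nhds hq) hΩW
    have hG : ContDiffAt ℝ ∞ G p :=
      (contDiffOn_iteratedPartialSnd hW hV k).contDiffAt (hWnhds p hp)
    have hDG : DifferentiableAt ℝ (fderiv ℝ G) p :=
      (hG.fderiv_right (m := ∞) (by simp)).differentiableAt (by simp)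
    have hclm : ∀ v : ℝ × ℝ,
        fderiv ℝ (fun q => fderiv ℝ G q v) p = (fderiv ℝ (fderiv ℝ G) p).flip v := by
      intro v
      simpa using fderiv_clm_apply hDG (differentiableAt_const v)
    have hev : iteratedPartialSnd W V (k + 1) =ᶠ[𝓝 p] fun q => fderiv ℝ G q (0, 1) := by
      filter_upwards [hΩ.mem_nhds hp] with q hq
      simp only [iteratedPartialSnd, G, fderivWithin_of_mem_nhds (hWnhds q hq)]
    have hih : (fun q => fderiv ℝ G q (1, 0)) =ᶠ[𝓝 p]
        iteratedPartialSnd Ω (fun q => fderiv ℝ V q (1, 0)) k := by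
      filter_upwards [hΩ.mem_nhds hp] with q hq
      exact ih hq
    calc fderiv ℝ (iteratedPartialSnd W V (k + 1)) p (1, 0)
        = fderiv ℝ (fderiv ℝ G) p (1, 0) (0, 1) := by rw [hev.fderiv_eq, hclm]; rfl
      _ = fderiv ℝ (fderiv ℝ G) p (0, 1) (1, 0) := hG.isSymmSndFDerivAt (by
          simp only [minSmoothness_of_isRCLikeNormedField]; exact WithTop.coe_le_coe.2 le_top) _ _
      _ = fderiv ℝ (iteratedPartialSnd Ω (fun q => fderiv ℝ V q (1, 0)) k) p (0, 1) := by
          rw [← hih.fderiv_eq, hclm]; rfl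
      _ = _ := by
          simp only [iteratedPartialSnd, fderivWithin_of_isOpen hΩ hp]

theorem continuousOn_iteratedDeriv_snd {I : Set ℝ} (hI : UniqueDiffOn ℝ I)
    (hV : ContDiffOn ℝ ∞ V (I ×ˢ univ)) (k : ℕ) :
    ContinuousOn (fun p : ℝ × ℝ => iteratedDeriv k (fun y => V (p.1, y)) p.2) (I ×ˢ univ) :=
  (contDiffOn_iteratedPartialSnd (hI.prod uniqueDiffOn_univ) hV k).continuousOn.congr
    fun p hp => (iteratedPartialSnd_eq_iteratedDeriv hI hV k hp.1 p.2).symm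

theorem hasDerivAt_iteratedDeriv_snd {I : Set ℝ} (hI : UniqueDiffOn ℝ I)
    (hV : ContDiffOn ℝ ∞ V (I ×ˢ univ)) {t : ℝ} (ht : I ∈ 𝓝 t) {V' : ℝ → F}
    (hV' : ∀ y, HasDerivAt (fun s => V (s, y)) (V' y) t) (k : ℕ) (x : ℝ) :
    HasDerivAt (fun s => iteratedDeriv k (fun y => V (s, y)) x) (iteratedDeriv k V' x) t := by
  set S := I ×ˢ (univ : Set ℝ)
  set Ω := interior I ×ˢ (univ : Set ℝ)
  have hΩ : IsOpen Ω := isOpen_interior.prod isOpen_univ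
  have hΩS : Ω ⊆ S := prod_mono interior_subset subset_rfl
  have htΩ : ∀ y, (t, y) ∈ Ω := fun y => ⟨mem_interior_iff_mem_nhds.2 ht, mem_univ y⟩
  have hSnhds : ∀ y, S ∈ 𝓝 (t, y) := fun y => mem_of_superset (hΩ.mem_nhds (htΩ y)) hΩS
  have hV'eq : V' = fun y => fderiv ℝ V (t, y) (1, 0) := funext fun y =>
    (hV' y).unique ((hV.contDiffAt (hSnhds y)).differentiableAt (by simp)).hasDerivAt_partial_fst
  have hT0 : ContDiffOn ℝ ∞ (fun q => fderiv ℝ V q (1, 0)) Ω :=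
    ((hV.mono hΩS).fderiv_of_isOpen hΩ (by simp)).clm_apply contDiffOn_const
  have hG := ((contDiffOn_iteratedPartialSnd (hI.prod uniqueDiffOn_univ) hV k).contDiffAt
    (hSnhds x)).differentiableAt (by simp) |>.hasDerivAt_partial_fst
  rw [fderiv_iteratedPartialSnd_apply_fst hΩ hΩS (hI.prod uniqueDiffOn_univ) hV k (htΩ x),
    iteratedPartialSnd_eq_iteratedDeriv isOpen_interior.uniqueDiffOn hT0 k
      (mem_interior_iff_mem_nhds.2 ht) x] at hG
  rw [hV'eq]
  refine hG.congr_of_eventuallyEq ?_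
  filter_upwards [ht] with s hs
  exact (iteratedPartialSnd_eq_iteratedDeriv hI hV k hs x).symm

end PartialDerivatives

section Riccati

variable {T : ℝ} {V : ℝ × ℝ → ℝ} {c₀ c₁ : ℝ → ℝ} {h : ℝ → ℝ → ℝ}

theorem exists_abs_iteratedDeriv_snd_le_of_riccati_of_lt {L H B : ℝ} {k : ℕ} (hT : 0 < T)
    (hk : k ≠ 0) (hV : ContDiffOn ℝ ∞ V (Ico 0 T ×ˢ univ))
    (hper : ∀ t ∈ Ico 0 T, Function.Periodic (fun x => V (t, x)) 1)
    (hh : ∀ t ∈ Ioo 0 T, ContDiff ℝ ∞ (h t))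
    (heq : ∀ t ∈ Ioo 0 T, ∀ x, HasDerivAt (fun s => V (s, x))
      (c₀ t + c₁ t * V (t, x) + h t x * V (t, x) ^ 2) t)
    (hc₁ : ∀ t ∈ Ioo 0 T, |c₁ t| ≤ L)
    (hH : ∀ j ≤ k, ∀ t ∈ Ioo 0 T, ∀ x, |iteratedDeriv j (h t) x| ≤ H)
    (hB : ∀ j < k, ∀ t ∈ Ico 0 T, ∀ x, |iteratedDeriv j (fun y => V (t, y)) x| ≤ B) :
    ∃ C, ∀ t ∈ Ico 0 T, ∀ x, |iteratedDeriv k (fun y => V (t, y)) x| ≤ C := by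
  set τ := T / 2
  have hτ : τ ∈ Ioo 0 T := ⟨half_pos hT, half_lt_self hT⟩
  have hL : 0 ≤ L := (abs_nonneg _).trans (hc₁ τ hτ)
  have hH₀ : 0 ≤ H := (abs_nonneg _).trans (hH 0 k.zero_le τ hτ 0)
  have hB₀ : 0 ≤ B :=
    (abs_nonneg _).trans (hB 0 (Nat.pos_of_ne_zero hk) τ (Ioo_subset_Ico_self hτ) 0)
  have hIcc : Icc 0 τ ⊆ Ico 0 T := Icc_subset_Ico_right hτ.2
  obtain ⟨C₁, hC₁⟩ := exists_norm_le_of_continuousOn_of_periodic one_pos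
    ((continuousOn_iteratedDeriv_snd (uniqueDiffOn_Ico 0 T) hV k).mono
      (prod_mono hIcc subset_rfl))
    fun t ht => (hper t (hIcc ht)).iteratedDeriv k
  simp only [Real.norm_eq_abs] at hC₁
  set K := L + 4 ^ k * H * B
  set ε := 4 ^ k * H * B ^ 2
  refine ⟨max C₁ (gronwallBound C₁ K ε (T - τ)), fun t ht x => ?_⟩
  rcases le_or_gt t τ with htτ | hτt
  · exact (hC₁ t ⟨ht.1, htτ⟩ x).trans (le_max_left _ _)
  refine le_max_of_le_right ?_
  have hineq : ∀ s ∈ Ioo 0 T,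
      |iteratedDeriv k (fun y => c₀ s + c₁ s * V (s, y) + h s y * V (s, y) ^ 2) x|
        ≤ K * |iteratedDeriv k (fun y => V (s, y)) x| + ε := fun s hs => by
    refine (abs_iteratedDeriv_riccati_le hk
      ((hV.contDiff_slice (Ioo_subset_Ico_self hs)).of_le (by exact_mod_cast le_top))
      ((hh s hs).of_le (by exact_mod_cast le_top)) (c₀ s) (c₁ s)
      (fun j hj => hB j hj s (Ioo_subset_Ico_self hs) x) (fun j hj => hH j hj s hs x)).trans ?_
    gcongr
    exact add_le_add_left (hc₁ s hs) _
  have hIoo : ∀ s ∈ Ico τ T, s ∈ Ioo 0 T := fun s hs => ⟨hτ.1.trans_le hs.1, hs.2⟩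
  simpa only [Real.norm_eq_abs] using norm_le_gronwallBound_of_hasDerivAt
    (φ := fun s => iteratedDeriv k (fun y => V (s, y)) x) (by positivity) (by positivity)
    (fun s hs => hasDerivAt_iteratedDeriv_snd (uniqueDiffOn_Ico 0 T) hV
      (Ico_mem_nhds_iff.2 (hIoo s hs)) (heq s (hIoo s hs)) k x)
    (by simpa only [Real.norm_eq_abs] using hC₁ τ ⟨hτ.1.le, le_rfl⟩ x)
    (fun s hs => by simpa only [Real.norm_eq_abs] using hineq s (hIoo s hs))
    t ⟨hτt.le, ht.2⟩

theorem exists_abs_iteratedDeriv_snd_le_of_riccati {L B₀ : ℝ} (hT : 0 < T)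
    (hV : ContDiffOn ℝ ∞ V (Ico 0 T ×ˢ univ))
    (hper : ∀ t ∈ Ico 0 T, Function.Periodic (fun x => V (t, x)) 1)
    (hh : ∀ t ∈ Ioo 0 T, ContDiff ℝ ∞ (h t))
    (heq : ∀ t ∈ Ioo 0 T, ∀ x, HasDerivAt (fun s => V (s, x))
      (c₀ t + c₁ t * V (t, x) + h t x * V (t, x) ^ 2) t)
    (hc₁ : ∀ t ∈ Ioo 0 T, |c₁ t| ≤ L)
    (hH : ∀ j, ∃ H, ∀ t ∈ Ioo 0 T, ∀ x, |iteratedDeriv j (h t) x| ≤ H)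
    (hV₀ : ∀ t ∈ Ico 0 T, ∀ x, |V (t, x)| ≤ B₀) (k : ℕ) :
    ∃ C, ∀ t ∈ Ico 0 T, ∀ x, |iteratedDeriv k (fun y => V (t, y)) x| ≤ C := by
  induction k using Nat.strong_induction_on with
  | _ k ih =>
    rcases eq_or_ne k 0 with rfl | hk
    · exact ⟨B₀, by simpa using hV₀⟩
    obtain ⟨B, hB⟩ := exists_forall_lt_of_monotone
      (P := fun j C => ∀ t ∈ Ico 0 T, ∀ x, |iteratedDeriv j (fun y => V (t, y)) x| ≤ C)
      (fun j _ _ hC hP t ht x => (hP t ht x).trans hC) ih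
    obtain ⟨H, hH⟩ := exists_forall_lt_of_monotone (k := k + 1)
      (P := fun j C => ∀ t ∈ Ioo 0 T, ∀ x, |iteratedDeriv j (h t) x| ≤ C)
      (fun j _ _ hC hP t ht x => (hP t ht x).trans hC) fun j _ => hH j
    exact exists_abs_iteratedDeriv_snd_le_of_riccati_of_lt hT hk hV hper hh heq hc₁
      (fun j hj => hH j (Nat.lt_succ_of_le hj)) hB

end Riccati

theorem exists_abs_iteratedDeriv_add_mul_le {f : ℝ → ℝ} {s : Set ℝ} {p q : ℝ → ℝ} {P Q : ℝ}
    (hp : ∀ t ∈ s, |p t| ≤ P) (hq : ∀ t ∈ s, |q t| ≤ Q)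
    (hf : ∀ j, ∃ C, ∀ x, |iteratedDeriv j f x| ≤ C) (j : ℕ) :
    ∃ H, ∀ t ∈ s, ∀ x, |iteratedDeriv j (fun y => p t + q t * f y) x| ≤ H := by
  obtain ⟨F, hF⟩ := hf j
  refine ⟨P + Q * F, fun t ht x => ?_⟩
  calc _ ≤ |p t| + |q t| * |iteratedDeriv j f x| := by
        rcases eq_or_ne j 0 with rfl | hj
        · simpa [abs_mul] using abs_add_le (p t) (q t * f x)
        · rw [iteratedDeriv_const_add (Nat.pos_of_ne_zero hj), iteratedDeriv_const_mul_field,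
            abs_mul]
          exact le_add_of_nonneg_left (abs_nonneg _)
    _ ≤ P + Q * F := add_le_add (hp t ht)
        (mul_le_mul (hq t ht) (hF x) (abs_nonneg _) ((abs_nonneg _).trans (hq t ht)))

theorem hasDerivAt_inv_one_add_of_quadratic {φ : ℝ → ℝ} {t a α c y : ℝ}
    (hφ : HasDerivAt φ ((a * φ t ^ 2 + α * y) * c - φ t) t) (h1 : 1 + φ t ≠ 0) :
    HasDerivAt (fun s => (1 + φ s)⁻¹) (-(c * a) + (1 + c * (2 * a)) * (1 + φ t)⁻¹
      + (-1 + c * -a + c * -α * y) * (1 + φ t)⁻¹ ^ 2) t := by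
  refine ((hφ.const_add 1).fun_inv h1).congr_deriv ?_
  field_simp
  ring

theorem abs_iteratedDeriv_rho_le {u : ℝ → ℝ → ℝ} {t : ℝ} (ht : 0 ≤ t) (k : ℕ) (x : ℝ) :
    |iteratedDeriv k (rho u t) x| ≤ |iteratedDeriv k (fun y => (1 + u t y)⁻¹) x| := by
  rw [show rho u t = fun y => Real.exp (-t) * (1 + u t y)⁻¹ from
      funext fun y => div_eq_mul_inv _ _,
    iteratedDeriv_const_mul_field, abs_mul, abs_of_pos (Real.exp_pos _)]
  exact mul_le_of_le_one_left (abs_nonneg _) (Real.exp_le_one_iff.2 (neg_nonpos.2 ht))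

theorem rho_derivatives_bounded_general
    (a α M T : ℝ) (hT : 0 < T)
    (f : ℝ → ℝ) (hf : ContDiff ℝ (⊤ : ℕ∞) f)
    (hfper : ∀ x, f (x + 1) = f x)
    (u : ℝ → ℝ → ℝ)
    (hu : ContDiffOn ℝ (⊤ : ℕ∞) (fun p : ℝ × ℝ => u p.1 p.2) (Set.Ico 0 T ×ˢ Set.univ))
    (huper : ∀ t ∈ Set.Ico 0 T, ∀ x, u t (x + 1) = u t x)
    (hupos : ∀ t ∈ Set.Ico 0 T, ∀ x, 0 ≤ u t x)
    (hmass0 : ∀ t ∈ Set.Ico 0 T, 0 ≤ ∫ x in (0:ℝ)..1, u t x)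
    (hmassM : ∀ t ∈ Set.Ico 0 T, (∫ x in (0:ℝ)..1, u t x) ≤ M)
    (hPDE : ∀ t ∈ Set.Ico 0 T, ∀ x,
      derivWithin (fun s => u s x) (Set.Ici 0) t
        = (a * u t x ^ 2 + α * f x) * (M - ∫ y in (0:ℝ)..1, u t y) - u t x)
    :
    ∀ k : ℕ, 1 ≤ k → ∃ C : ℝ, ∀ t ∈ Set.Ico 0 T, ∀ x : ℝ,
      |iteratedDeriv k (rho u t) x| ≤ C := by
  intro k _
  set c : ℝ → ℝ := fun t => M - ∫ y in (0:ℝ)..1, u t y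
  have hc : ∀ t ∈ Ioo 0 T, ∀ b, |c t * b| ≤ M * |b| := fun t ht b => by
    have h₀ := hmass0 t (Ioo_subset_Ico_self ht)
    have h₁ := hmassM t (Ioo_subset_Ico_self ht)
    rw [abs_mul]
    exact mul_le_mul_of_nonneg_right (abs_sub_le_of_nonneg_of_le (h₀.trans h₁) le_rfl h₀ h₁)
      (abs_nonneg b)
  have hu₁ : ∀ t ∈ Ico 0 T, ∀ x, 1 ≤ 1 + u t x := fun t ht x => by linarith [hupos t ht x]
  have hf' : ∀ j, ∃ C, ∀ x, |iteratedDeriv j f x| ≤ C := fun j => by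
    simpa using (Function.Periodic.iteratedDeriv hfper j).exists_norm_le_of_continuous
      one_ne_zero (hf.continuous_iteratedDeriv j (by exact_mod_cast le_top))
  have hV : ∀ t ∈ Ioo 0 T, ∀ x, HasDerivAt (fun s => (1 + u s x)⁻¹)
      (-(c t * a) + (1 + c t * (2 * a)) * (1 + u t x)⁻¹
        + (-1 + c t * -a + c t * -α * f x) * (1 + u t x)⁻¹ ^ 2) t := fun t ht x =>
    hasDerivAt_inv_one_add_of_quadratic
      ((hu.hasDerivAt_derivWithin_slice (by simp) (Ico_mem_nhds_iff.2 ht) (Ici_mem_nhds ht.1)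
        x).congr_deriv (hPDE t (Ioo_subset_Ico_self ht) x))
      (one_pos.trans_le (hu₁ t (Ioo_subset_Ico_self ht) x)).ne'
  obtain ⟨C, hC⟩ := exists_abs_iteratedDeriv_snd_le_of_riccati
    (V := fun p => (1 + u p.1 p.2)⁻¹) hT
    ((contDiffOn_const.add hu).inv fun p hp => (one_pos.trans_le (hu₁ p.1 hp.1 p.2)).ne')
    (fun t ht x => by simp only [huper t ht x]) (fun t _ => by fun_prop) hV
    (fun t ht => (abs_add_le _ _).trans (add_le_add_right (hc t ht _) _))
    (exists_abs_iteratedDeriv_add_mul_le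
      (fun t ht => (abs_add_le _ _).trans (add_le_add_right (hc t ht _) _))
      (fun t ht => hc t ht _) hf')
    (fun t ht x => by
      rw [abs_inv, abs_of_pos (one_pos.trans_le (hu₁ t ht x))]
      exact inv_le_one_of_one_le₀ (hu₁ t ht x))
    k
  exact ⟨C, fun t ht x => (abs_iteratedDeriv_rho_le ht.1 k x).trans (hC t ht x)⟩

/-- all spatial derivatives of `ρ` are bounded up to the finite time `T`. -/
theorem rho_derivatives_bounded
    (a α M T : ℝ) (ha : 0 < a) (hα : 0 ≤ α) (hM : 0 < M) (hT : 0 < T)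
    (f : ℝ → ℝ) (hf : ContDiff ℝ (⊤ : ℕ∞) f)
    (hf0 : ∀ x, 0 ≤ f x)
    (hfper : ∀ x, f (x + 1) = f x)
    (u : ℝ → ℝ → ℝ)
    (hu : ContDiffOn ℝ (⊤ : ℕ∞) (fun p : ℝ × ℝ => u p.1 p.2) (Set.Ico 0 T ×ˢ Set.univ))
    (huper : ∀ t ∈ Set.Ico 0 T, ∀ x, u t (x + 1) = u t x)
    (hupos : ∀ t ∈ Set.Ico 0 T, ∀ x, 0 ≤ u t x)
    (hmass0 : ∀ t ∈ Set.Ico 0 T, 0 ≤ ∫ x in (0:ℝ)..1, u t x)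
    (hmassM : ∀ t ∈ Set.Ico 0 T, (∫ x in (0:ℝ)..1, u t x) ≤ M)
    (hPDE : ∀ t ∈ Set.Ico 0 T, ∀ x,
      derivWithin (fun s => u s x) (Set.Ici 0) t
        = (a * u t x ^ 2 + α * f x) * (M - ∫ y in (0:ℝ)..1, u t y) - u t x)
    :
    ∀ k : ℕ, 1 ≤ k → ∃ C : ℝ, ∀ t ∈ Set.Ico 0 T, ∀ x : ℝ,
      |iteratedDeriv k (rho u t) x| ≤ C :=
  rho_derivatives_bounded_general a α M T hT f hf hfper u hu huper hupos hmass0 hmassM hPDE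
end
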